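/- arXiv:0902.3075 — 6 statements merged into one kernel-verified Lean document; each statement's English description precedes it below -/
import Mathlib

section
/- If d < n/2, then there exists a partition of V_n(q) consisting of q^{n-d} subspaces of dimension d and one subspace of dimension n - d. -/
open scoped Classical

/-- A partition of a vector space: a set of nonzero subspaces such that every
nonzero vector lies in exactly one of them. -/
def IsVPartition {F V : Type*} [Field F] [AddCommGroup V] [Module F V]
    (P : Set (Submodule F V)) : Prop :=
  (∀ W ∈ P, W ≠ ⊥) ∧ ∀ v : V, v ≠ 0 → ∃! W : Submodule F V, W ∈ P ∧ v ∈ W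

/-- The set of dimensions of components of a set of subspaces. -/
def DimSet {F V : Type*} [Field F] [AddCommGroup V] [Module F V]
    (P : Set (Submodule F V)) : Set ℕ :=
  {d | ∃ W ∈ P, Module.finrank F W = d}

/-!
Let `K ⊇ F` be the field with `q ^ (n - d)` elements and embed `U = F ^ d` into `K` by an
injective `F`-linear map `ι`. In `U × K` the graphs of the maps `u ↦ a * ι u`, `a ∈ K`, are
`q ^ (n - d)` subspaces of dimension `d`; together with `0 × K` they partition `U × K`, because
a vector `(u, k)` with `u ≠ 0` lies on the graph for `a = k / ι u` and on no other one.
Transporting along a linear isomorphism `U × K ≃ F ^ n` gives the required partition.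
-/

open Module

namespace IsVPartition

variable {F V V' : Type*} [Field F] [AddCommGroup V] [Module F V] [AddCommGroup V'] [Module F V']

theorem map_linearEquiv {P : Set (Submodule F V)} (hP : IsVPartition P) (e : V ≃ₗ[F] V') :
    IsVPartition (Submodule.map (e : V →ₗ[F] V') '' P) := by
  refine ⟨?_, fun v hv => ?_⟩
  · rintro _ ⟨W, hW, rfl⟩
    rw [ne_eq, Submodule.map_eq_bot_iff]
    exact hP.1 W hW
  · obtain ⟨W, ⟨hW, hvW⟩, huniq⟩ := hP.2 (e.symm v) (by simpa using hv)
    refine ⟨W.map (e : V →ₗ[F] V'), ⟨⟨W, hW, rfl⟩, (Submodule.mem_map_equiv _).2 hvW⟩,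
      ?_⟩
    rintro _ ⟨⟨W', hW', rfl⟩, hvW'⟩
    rw [huniq W' ⟨hW', (Submodule.mem_map_equiv _).1 hvW'⟩]

end IsVPartition

theorem card_filter_finrank_image_map_linearEquiv {F V V' : Type*} [Field F] [AddCommGroup V]
    [Module F V] [AddCommGroup V'] [Module F V'] (e : V ≃ₗ[F] V') (P : Finset (Submodule F V))
    (k : ℕ) :
    ((P.image (Submodule.map (e : V →ₗ[F] V'))).filter
        fun W : Submodule F V' => finrank F W = k).card =
      (P.filter fun W : Submodule F V => finrank F W = k).card := by
  rw [Finset.filter_image,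
    Finset.card_image_of_injective _ (Submodule.map_injective_of_injective e.injective)]
  simp only [LinearEquiv.finrank_map_eq]

theorem LinearMap.finrank_graph {R M N : Type*} [Ring R] [StrongRankCondition R]
    [AddCommGroup M] [Module R M] [AddCommGroup N] [Module R N] (f : M →ₗ[R] N) :
    finrank R f.graph = finrank R M := by
  have hinj : Function.Injective (LinearMap.id.prod f) := fun x y h => congrArg Prod.fst h
  rw [LinearMap.graph_eq_range_prod, ← (LinearEquiv.ofInjective _ hinj).finrank_eq]

theorem Submodule.mem_snd_iff {R M N : Type*} [Semiring R] [AddCommMonoid M] [Module R M]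
    [AddCommMonoid N] [Module R N] (x : M × N) : x ∈ Submodule.snd R M N ↔ x.1 = 0 := by
  simp [Submodule.snd]

section GraphPartition

variable {F K U : Type*} [Field F] [Field K] [Algebra F K] [AddCommGroup U] [Module F U]
  {ι : U →ₗ[F] K}

theorem mem_graph_smul_iff (a : K) (x : U × K) : x ∈ (a • ι).graph ↔ x.2 = a * ι x.1 := by
  simp [LinearMap.mem_graph_iff]

variable (ι) in
noncomputable def graphPartition [Fintype K] : Finset (Submodule F (U × K)) :=
  insert (Submodule.snd F U K) (Finset.univ.image fun a : K => (a • ι).graph)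

theorem graph_smul_injective [Nontrivial U] (hι : Function.Injective ι) :
    Function.Injective fun a : K => (a • ι).graph := by
  obtain ⟨u, hu⟩ := exists_ne (0 : U)
  have hιu : ι u ≠ 0 := (map_ne_zero_iff ι hι).2 hu
  intro a b hab
  have hmem : (u, a * ι u) ∈ (b • ι).graph := by
    rw [← show (a • ι).graph = (b • ι).graph from hab, mem_graph_smul_iff]
  exact mul_right_cancel₀ hιu ((mem_graph_smul_iff b _).1 hmem)

theorem isVPartition_insert_snd_range_graph_smul [Nontrivial U] (hι : Function.Injective ι) :
    IsVPartition (insert (Submodule.snd F U K) (Set.range fun a : K => (a • ι).graph)) := by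
  obtain ⟨u₀, hu₀⟩ := exists_ne (0 : U)
  refine ⟨?_, ?_⟩
  · rintro W (rfl | ⟨a, rfl⟩) <;> rw [Submodule.ne_bot_iff]
    · exact ⟨(0, 1), (Submodule.mem_snd_iff _).2 rfl, by simp⟩
    · exact ⟨(u₀, a * ι u₀), (mem_graph_smul_iff a _).2 rfl, by simp [hu₀]⟩
  rintro ⟨u, k⟩ hv
  by_cases hu : u = 0
  · subst hu
    have hk : k ≠ 0 := by simpa using hv
    refine ⟨Submodule.snd F U K, ⟨Set.mem_insert _ _, (Submodule.mem_snd_iff _).2 rfl⟩, ?_⟩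
    rintro W ⟨rfl | ⟨a, rfl⟩, hW⟩
    · rfl
    · exact absurd (by simpa [mem_graph_smul_iff] using hW) hk
  · have hιu : ι u ≠ 0 := (map_ne_zero_iff ι hι).2 hu
    refine ⟨((k / ι u) • ι).graph, ⟨Set.mem_insert_of_mem _ ⟨_, rfl⟩, ?_⟩, ?_⟩
    · rw [mem_graph_smul_iff, div_mul_cancel₀ _ hιu]
    rintro W ⟨rfl | ⟨a, rfl⟩, hW⟩
    · exact absurd ((Submodule.mem_snd_iff _).1 hW) hu
    · rw [mem_graph_smul_iff] at hW
      rw [eq_div_of_mul_eq hιu hW.symm]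

variable [Fintype K]

theorem isVPartition_graphPartition [Nontrivial U] (hι : Function.Injective ι) :
    IsVPartition (graphPartition ι : Set (Submodule F (U × K))) := by
  simpa [graphPartition] using isVPartition_insert_snd_range_graph_smul hι

theorem finrank_of_mem_graphPartition {W : Submodule F (U × K)} (hW : W ∈ graphPartition ι) :
    finrank F W = finrank F U ∨ finrank F W = finrank F K := by
  rcases Finset.mem_insert.1 hW with rfl | hW
  · exact Or.inr (Submodule.sndEquiv F U K).finrank_eq
  · obtain ⟨a, -, rfl⟩ := Finset.mem_image.1 hW
    exact Or.inl (LinearMap.finrank_graph _)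

theorem card_filter_finrank_eq_left_graphPartition [Nontrivial U] (hι : Function.Injective ι)
    (hUK : finrank F U ≠ finrank F K) :
    ((graphPartition ι).filter fun W : Submodule F (U × K) => finrank F W = finrank F U).card =
      Fintype.card K := by
  rw [graphPartition, Finset.filter_insert,
    if_neg (by rw [(Submodule.sndEquiv F U K).finrank_eq]; exact hUK.symm),
    Finset.filter_true_of_mem, Finset.card_image_of_injective _ (graph_smul_injective hι),
    Finset.card_univ]
  intro W hW
  obtain ⟨a, -, rfl⟩ := Finset.mem_image.1 hW
  exact LinearMap.finrank_graph _

theorem card_filter_finrank_eq_right_graphPartition (hUK : finrank F U ≠ finrank F K) :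
    ((graphPartition ι).filter fun W : Submodule F (U × K) => finrank F W = finrank F K).card =
      1 := by
  rw [graphPartition, Finset.filter_insert, if_pos (Submodule.sndEquiv F U K).finrank_eq,
    Finset.filter_false_of_mem, insert_empty_eq, Finset.card_singleton]
  intro W hW
  obtain ⟨a, -, rfl⟩ := Finset.mem_image.1 hW
  rw [LinearMap.finrank_graph]
  exact hUK

end GraphPartition

theorem stmt6 (q n d : ℕ) (F : Type) [Field F] [Fintype F]
    (hq : Fintype.card F = q) (hd : 0 < d) (hdn : 2 * d < n) :
    ∃ P : Finset (Submodule F (Fin n → F)),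
      IsVPartition (↑P : Set (Submodule F (Fin n → F))) ∧
      (∀ W ∈ P, Module.finrank F W = d ∨ Module.finrank F W = n - d) ∧
      (P.filter (fun (W : Submodule F (Fin n → F)) => Module.finrank F W = d)).card = q ^ (n - d) ∧
      (P.filter (fun (W : Submodule F (Fin n → F)) => Module.finrank F W = n - d)).card = 1 := by
  have : NeZero (n - d) := ⟨by omega⟩
  have : Fact (ringChar F).Prime := ⟨CharP.char_is_prime F _⟩
  let K := FiniteField.Extension F (ringChar F) (n - d)
  have : Fintype K := Fintype.ofFinite K
  have hK : finrank F K = n - d := FiniteField.finrank_extension F _ _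
  have hcardK : Fintype.card K = q ^ (n - d) := by
    rw [Fintype.card_eq_nat_card, FiniteField.natCard_extension, Nat.card_eq_fintype_card, hq]
  have hU : finrank F (Fin d → F) = d := finrank_fin_fun F
  have hUK : finrank F (Fin d → F) ≠ finrank F K := by omega
  have : Nonempty (Fin d) := ⟨⟨0, hd⟩⟩
  obtain ⟨ι, hι⟩ : ∃ ι : (Fin d → F) →ₗ[F] K, Function.Injective ι :=
    finrank_le_iff_exists_linearMap.1 (by omega)
  let e : ((Fin d → F) × K) ≃ₗ[F] (Fin n → F) :=
    LinearEquiv.ofFinrankEq _ _ (by rw [finrank_prod, hU, hK, finrank_fin_fun]; omega)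
  refine ⟨(graphPartition ι).image (Submodule.map (e : _ →ₗ[F] _)), ?_, ?_, ?_, ?_⟩
  · rw [Finset.coe_image]
    exact (isVPartition_graphPartition hι).map_linearEquiv e
  · simp only [Finset.mem_image]
    rintro _ ⟨W, hW, rfl⟩
    have hW := finrank_of_mem_graphPartition hW
    rwa [hU, hK, ← LinearEquiv.finrank_map_eq e] at hW
  · rw [card_filter_finrank_image_map_linearEquiv, ← hcardK,
      ← card_filter_finrank_eq_left_graphPartition hι hUK, hU]
  · rw [card_filter_finrank_image_map_linearEquiv,
      ← card_filter_finrank_eq_right_graphPartition (ι := ι) hUK, hK]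
end

section
/- In any non-trivial partition P of V_n(q), if some component has the minimum dimension among all components and there exist components of strictly larger dimension, then the number s of components of minimum dimension t is a positive multiple of q when counted as follows: the number of minimum-dimension components disjoint from the dual (complementary) subspace W of a fixed minimum-dimension component V_1 is a nonzero multiple of q; in particular s ≥ q. -/
open scoped Classical

/-!
Count the vectors outside `W`. Every nonzero vector lies in exactly one component `U`, so
`q ^ n - q ^ (n - t) = ∑ U, (|U| - |U ⊓ W|)`. Modulo `q` the cardinality of a subspace is `1` if
it is zero and `0` otherwise; since no component is zero, the congruence says that
`q ∣ #{U ∈ P | U ⊓ W = ⊥}`. A component meeting `W` trivially has dimension at most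
`n - dim W = t`, hence exactly `t`, and `V1` is one of them.
-/

open Finset

theorem Submodule.cast_natCard_eq_ite {F V : Type*} [Field F] [Fintype F] [AddCommGroup V]
    [Module F V] [Finite V] (U : Submodule F V) :
    (Nat.card U : ZMod (Fintype.card F)) = if U = ⊥ then 1 else 0 := by
  split_ifs with hU
  · simp [hU]
  · have : Nontrivial U := Submodule.nontrivial_iff_ne_bot.mpr hU
    rw [Module.natCard_eq_pow_finrank (K := F), Nat.card_eq_fintype_card, Nat.cast_pow,
      ZMod.natCast_self, zero_pow Module.finrank_pos.ne']

theorem Submodule.card_filter_notMem_and_mem_add_natCard_inf {R V : Type*} [Semiring R]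
    [AddCommMonoid V] [Module R V] [Fintype V] (U W : Submodule R V) :
    #(univ.filter fun v => v ∉ W ∧ v ∈ U) + Nat.card ↥(U ⊓ W) = Nat.card U := by
  have hcard (S : Submodule R V) : Nat.card S = #(univ.filter (· ∈ S)) := by
    rw [Nat.card_eq_fintype_card, Fintype.card_subtype]
  rw [hcard, hcard, add_comm,
    ← card_filter_add_card_filter_not (s := univ.filter (· ∈ U)) (· ∈ W), filter_filter,
    filter_filter]
  simp only [Submodule.mem_inf, and_comm]

theorem IsVPartition.card_eq_sum_card_filter_mem {F V : Type*} [Field F] [AddCommGroup V]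
    [Module F V] [DecidableEq V] {P : Finset (Submodule F V)}
    (hP : IsVPartition (↑P : Set (Submodule F V))) {A : Finset V} (hA : 0 ∉ A) :
    #A = ∑ U ∈ P, #(A.filter (· ∈ U)) := by
  rw [← card_biUnion]
  · congr 1
    ext v
    simp only [mem_biUnion, mem_filter]
    refine ⟨fun hv => ?_, fun ⟨_, _, hv, _⟩ => hv⟩
    obtain ⟨U, ⟨hU, hvU⟩, -⟩ := hP.2 v (ne_of_mem_of_not_mem hv hA)
    exact ⟨U, hU, hv, hvU⟩
  · intro U hU U' hU' hne
    refine disjoint_left.mpr fun v hv hv' => hne ?_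
    simp only [mem_filter] at hv hv'
    obtain ⟨_, -, huniq⟩ := hP.2 v (ne_of_mem_of_not_mem hv.1 hA)
    exact (huniq U ⟨hU, hv.2⟩).trans (huniq U' ⟨hU', hv'.2⟩).symm

theorem IsVPartition.card_dvd_card_filter_inf_eq_bot {F V : Type*} [Field F] [Fintype F]
    [AddCommGroup V] [Module F V] [Fintype V] {P : Finset (Submodule F V)}
    (hP : IsVPartition (↑P : Set (Submodule F V))) {W : Submodule F V} (hW : W ≠ ⊥) :
    Fintype.card F ∣ #(P.filter fun U => U ⊓ W = ⊥) := by
  set A := univ.filter fun v : V => v ∉ W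
  have hcount (U : Submodule F V) : (#(A.filter (· ∈ U)) : ZMod (Fintype.card F)) =
      (if U = ⊥ then 1 else 0) - if U ⊓ W = ⊥ then 1 else 0 := by
    rw [← U.cast_natCard_eq_ite, ← (U ⊓ W).cast_natCard_eq_ite,
      ← U.card_filter_notMem_and_mem_add_natCard_inf W, filter_filter]
    push_cast
    ring
  have hA : (#A : ZMod (Fintype.card F)) = 0 := by
    rw [← filter_true_of_mem (s := A) fun v _ => Submodule.mem_top (R := F) (x := v), hcount,
      if_neg (ne_bot_of_le_ne_bot hW le_top), top_inf_eq, if_neg hW, sub_zero]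
  rw [← ZMod.natCast_eq_zero_iff, natCast_card_filter, ← neg_eq_zero, ← sum_neg_distrib]
  calc ∑ U ∈ P, -(if U ⊓ W = ⊥ then (1 : ZMod (Fintype.card F)) else 0)
      = ∑ U ∈ P, (#(A.filter (· ∈ U)) : ZMod (Fintype.card F)) :=
        sum_congr rfl fun U hU => by rw [hcount, if_neg (hP.1 U hU), zero_sub]
    _ = #A := by rw [hP.card_eq_sum_card_filter_mem (by simp [A]), Nat.cast_sum]
    _ = 0 := hA

theorem Submodule.finrank_le_of_isCompl_of_inf_eq_bot {K E : Type*} [DivisionRing K]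
    [AddCommGroup E] [Module K E] [FiniteDimensional K E] {U V W : Submodule K E}
    (hVW : IsCompl V W) (hU : U ⊓ W = ⊥) : Module.finrank K U ≤ Module.finrank K V := by
  have hsup := Submodule.finrank_sup_add_finrank_inf_eq U W
  rw [hU, finrank_bot] at hsup
  have := (U ⊔ W).finrank_le
  have := Submodule.finrank_add_eq_of_isCompl hVW
  omega

theorem stmt7_general (q n t : ℕ) (F : Type) [Field F] [Fintype F]
    (hq : Fintype.card F = q) (ht : t < n)
    (P : Finset (Submodule F (Fin n → F)))
    (hP : IsVPartition (↑P : Set (Submodule F (Fin n → F))))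
    (V1 : Submodule F (Fin n → F)) (hV1 : V1 ∈ P)
    (hV1t : Module.finrank F V1 = t)
    (hmin : ∀ Vi ∈ P, t ≤ Module.finrank F Vi)
    (W : Submodule F (Fin n → F)) (hW : IsCompl V1 W) :
    q ∣ (P.filter (fun (Vi : Submodule F (Fin n → F)) => Module.finrank F Vi = t ∧ Vi ⊓ W = ⊥)).card ∧
    (P.filter (fun (Vi : Submodule F (Fin n → F)) => Module.finrank F Vi = t ∧ Vi ⊓ W = ⊥)).card ≠ 0 ∧
    q ≤ (P.filter (fun (Vi : Submodule F (Fin n → F)) => Module.finrank F Vi = t)).card := by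
  subst hq
  have hW_ne_bot : W ≠ ⊥ := by
    rintro rfl
    rw [eq_top_of_isCompl_bot hW, finrank_top, Module.finrank_fin_fun] at hV1t
    omega
  have hfilter :
      P.filter (fun Vi : Submodule F (Fin n → F) => Module.finrank F Vi = t ∧ Vi ⊓ W = ⊥) =
        P.filter (fun Vi : Submodule F (Fin n → F) => Vi ⊓ W = ⊥) :=
    filter_congr fun Vi hVi => and_iff_right_of_imp fun hVi_W =>
      le_antisymm (hV1t ▸ Submodule.finrank_le_of_isCompl_of_inf_eq_bot hW hVi_W) (hmin Vi hVi)
  have hdvd := hfilter ▸ hP.card_dvd_card_filter_inf_eq_bot hW_ne_bot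
  have hne :
      #(P.filter fun Vi : Submodule F (Fin n → F) =>
        Module.finrank F Vi = t ∧ Vi ⊓ W = ⊥) ≠ 0 :=
    card_ne_zero_of_mem (mem_filter.mpr ⟨hV1, hV1t, disjoint_iff.mp hW.disjoint⟩)
  refine ⟨hdvd, hne, ?_⟩
  exact (Nat.le_of_dvd (Nat.pos_of_ne_zero hne) hdvd).trans
    (card_le_card (monotone_filter_right _ fun _ _ h => h.1))

theorem stmt7 (q n t : ℕ) (F : Type) [Field F] [Fintype F]
    (hq : Fintype.card F = q) (hn : 1 < n) (ht : t < n)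
    (P : Finset (Submodule F (Fin n → F)))
    (hP : IsVPartition (↑P : Set (Submodule F (Fin n → F))))
    (hr : 2 ≤ P.card)
    (V1 : Submodule F (Fin n → F)) (hV1 : V1 ∈ P)
    (hV1t : Module.finrank F V1 = t)
    (hmin : ∀ Vi ∈ P, t ≤ Module.finrank F Vi)
    (hbig : ∃ Vj ∈ P, t < Module.finrank F Vj)
    (W : Submodule F (Fin n → F)) (hW : IsCompl V1 W) :
    q ∣ (P.filter (fun (Vi : Submodule F (Fin n → F)) => Module.finrank F Vi = t ∧ Vi ⊓ W = ⊥)).card ∧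
    (P.filter (fun (Vi : Submodule F (Fin n → F)) => Module.finrank F Vi = t ∧ Vi ⊓ W = ⊥)).card ≠ 0 ∧
    q ≤ (P.filter (fun (Vi : Submodule F (Fin n → F)) => Module.finrank F Vi = t)).card :=
  stmt7_general q n t F hq ht P hP V1 hV1 hV1t hmin W hW
end

section
/- Let P be a non-trivial partition of V_n(q) and let t be the minimum dimension occurring among the components of P. Then the number of components of P of dimension t is at least q + 1. (Lemma 3.2 with α = 1.) -/
open scoped Classical

/-!
Count the vectors of the affine hyperplane `f = 1` for a nonzero functional `f`: there are
`q ^ (n - 1)` of them, and a component `C` meets it in `q ^ (dim C - 1)` vectors if `C ⊄ ker f`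
and in none otherwise. Reducing modulo `q ^ t`, the number of `t`-dimensional components not
contained in `ker f` is divisible by `q`, hence is `0` or at least `q`. A functional not vanishing
on a `t`-dimensional component `W` produces a second one `C`, and a functional vanishing on `W`
but not on `C` then produces `q` of them besides `W`.
-/

open Module Finset

section

variable {F V : Type*} [Field F] [Fintype F] [AddCommGroup V] [Module F V]

theorem Module.Dual.card_apply_eq_one [Fintype V] {f : Dual F V} (hf : f ≠ 0) :
    Fintype.card {v // f v = 1} = Fintype.card F ^ (finrank F V - 1) := by
  obtain ⟨c, hc⟩ := LinearMap.surjective hf 1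
  let e : {v // f v = 1} ≃ LinearMap.ker f :=
    { toFun v := ⟨v - c, by simp [v.2, hc]⟩
      invFun k := ⟨k + c, by simp [hc]⟩
      left_inv v := by simp
      right_inv k := by simp }
  rw [Fintype.card_congr e, card_eq_pow_finrank (K := F),
    ← Dual.finrank_ker_add_one_of_ne_zero hf, Nat.add_sub_cancel]

theorem Submodule.card_mem_and_apply_eq_one [Fintype V] {f : Dual F V} {C : Submodule F V}
    (hC : ¬ C ≤ LinearMap.ker f) :
    #{v | v ∈ C ∧ f v = 1} = Fintype.card F ^ (finrank F C - 1) := by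
  have hf : f.domRestrict C ≠ 0 := fun h => hC fun v hv => by
    simpa using LinearMap.congr_fun h ⟨v, hv⟩
  rw [← Fintype.card_subtype, ← Dual.card_apply_eq_one hf]
  exact Fintype.card_congr (Equiv.subtypeSubtypeEquivSubtypeInter _ _).symm

end

namespace IsVPartition

variable {F V : Type*} [Field F] [AddCommGroup V] [Module F V] {P : Finset (Submodule F V)}

theorem inf_eq_bot (hP : IsVPartition (P : Set (Submodule F V))) {C D : Submodule F V}
    (hC : C ∈ P) (hD : D ∈ P) (hCD : C ≠ D) : C ⊓ D = ⊥ := by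
  refine (Submodule.eq_bot_iff _).2 fun v hv => by_contra fun hv0 => hCD ?_
  exact (hP.2 v hv0).unique ⟨hC, hv.1⟩ ⟨hD, hv.2⟩

theorem ne_top (hP : IsVPartition (P : Set (Submodule F V))) (hr : 2 ≤ #P) {W : Submodule F V}
    (hW : W ∈ P) : W ≠ ⊤ := by
  rintro rfl
  obtain ⟨U, hU, hUW⟩ := P.exists_mem_ne hr ⊤
  exact hP.1 U hU (by simpa using hP.inf_eq_bot hU hW hUW)

theorem card_filter_eq_sum [Fintype V] (hP : IsVPartition (P : Set (Submodule F V)))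
    {p : V → Prop} (hp : ∀ v, p v → v ≠ 0) :
    #{v | p v} = ∑ C ∈ P, #{v | v ∈ C ∧ p v} := by
  have hcover : ({v | p v} : Finset V) = P.biUnion fun C => {v | v ∈ C ∧ p v} := by
    ext v
    simp only [mem_filter, mem_univ, true_and, mem_biUnion]
    refine ⟨fun hv => ?_, fun ⟨_, _, _, hv⟩ => hv⟩
    obtain ⟨C, ⟨hC, hvC⟩, -⟩ := hP.2 v (hp v hv)
    exact ⟨C, hC, hvC, hv⟩
  rw [hcover, card_biUnion]
  intro C hC D hD hCD
  simp only [Function.onFun, disjoint_filter]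
  rintro v - ⟨hvC, hv⟩ ⟨hvD, -⟩
  exact hCD ((hP.2 v (hp v hv)).unique ⟨hC, hvC⟩ ⟨hD, hvD⟩)

variable [Fintype F] [Fintype V]

theorem pow_finrank_sub_one_eq_sum (hP : IsVPartition (P : Set (Submodule F V)))
    {f : Dual F V} (hf : f ≠ 0) :
    Fintype.card F ^ (finrank F V - 1) =
      ∑ C ∈ P with ¬ C ≤ LinearMap.ker f, Fintype.card F ^ (finrank F C - 1) := by
  rw [← Dual.card_apply_eq_one hf, Fintype.card_subtype,
    hP.card_filter_eq_sum fun v hv h0 => by simp [h0] at hv, sum_filter]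
  refine sum_congr rfl fun C _ => ?_
  split_ifs with hC
  · refine card_eq_zero.2 (filter_eq_empty_iff.2 fun v _ ⟨hvC, hv⟩ => ?_)
    simp [LinearMap.mem_ker.1 (hC hvC)] at hv
  · exact Submodule.card_mem_and_apply_eq_one hC

theorem dvd_card_filter_not_le_ker (hP : IsVPartition (P : Set (Submodule F V))) {t : ℕ}
    (hmin : ∀ C ∈ P, t ≤ finrank F C) (ht : 1 ≤ t) (htV : t < finrank F V)
    {f : Dual F V} (hf : f ≠ 0) :
    Fintype.card F ∣ #{C ∈ P | ¬ C ≤ LinearMap.ker f ∧ finrank F C = t} := by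
  have hsum := hP.pow_finrank_sub_one_eq_sum hf
  set q := Fintype.card F
  have hsmall : ∑ C ∈ P with ¬ C ≤ LinearMap.ker f ∧ finrank F C = t, q ^ (finrank F C - 1) =
      #{C ∈ P | ¬ C ≤ LinearMap.ker f ∧ finrank F C = t} * q ^ (t - 1) := by
    rw [sum_congr rfl fun C hC => by rw [(mem_filter.1 hC).2.2], sum_const, smul_eq_mul]
  rw [← sum_filter_add_sum_filter_not _ fun C : Submodule F V => finrank F C = t, filter_filter,
    filter_filter, hsmall] at hsum
  have hlarge : q ^ t ∣ ∑ C ∈ P with ¬ C ≤ LinearMap.ker f ∧ finrank F C ≠ t,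
      q ^ (finrank F C - 1) := by
    refine dvd_sum fun C hC => pow_dvd_pow q ?_
    have := hmin C (mem_filter.1 hC).1
    have := (mem_filter.1 hC).2.2
    omega
  have htotal : q ^ t ∣ q ^ (finrank F V - 1) := pow_dvd_pow q (by omega)
  rw [hsum] at htotal
  have hdvd := (Nat.dvd_add_left hlarge).1 htotal
  rw [← mul_pow_sub_one (by omega : t ≠ 0)] at hdvd
  exact Nat.dvd_of_mul_dvd_mul_right (by positivity) hdvd

theorem le_card_filter_not_le_ker (hP : IsVPartition (P : Set (Submodule F V))) {t : ℕ}
    (hmin : ∀ C ∈ P, t ≤ finrank F C) (ht : 1 ≤ t) (htV : t < finrank F V)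
    {f : Dual F V} {C : Submodule F V} (hC : C ∈ P) (hCt : finrank F C = t)
    (hCf : ¬ C ≤ LinearMap.ker f) :
    Fintype.card F ≤ #{C ∈ P | ¬ C ≤ LinearMap.ker f ∧ finrank F C = t} :=
  Nat.le_of_dvd (card_pos.2 ⟨C, mem_filter.2 ⟨hC, hCf, hCt⟩⟩)
    (hP.dvd_card_filter_not_le_ker hmin ht htV fun hf => hCf (by simp [hf]))

theorem exists_ne_finrank_eq (hP : IsVPartition (P : Set (Submodule F V))) {t : ℕ}
    (hmin : ∀ C ∈ P, t ≤ finrank F C) (ht : 1 ≤ t) (htV : t < finrank F V)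
    {W : Submodule F V} (hW : W ∈ P) (hWt : finrank F W = t) :
    ∃ C ∈ P, finrank F C = t ∧ C ≠ W := by
  obtain ⟨w, hwW, hw0⟩ := (Submodule.ne_bot_iff W).1 (hP.1 W hW)
  obtain ⟨f, hfw, -⟩ := (⊥ : Submodule F V).exists_dual_map_eq_bot_of_notMem
    (x := w) (by simpa using hw0) inferInstance
  have hq := (hP.le_card_filter_not_le_ker hmin ht htV hW hWt fun h => hfw (h hwW)).trans
    (card_le_card (monotone_filter_right _ fun _ _ h => h.2))
  obtain ⟨C, hC, hCW⟩ := exists_mem_ne (Fintype.one_lt_card.trans_le hq) W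
  exact ⟨C, (mem_filter.1 hC).1, (mem_filter.1 hC).2, hCW⟩

theorem add_one_le_card_filter_finrank_eq (hP : IsVPartition (P : Set (Submodule F V))) {t : ℕ}
    (hmin : ∀ C ∈ P, t ≤ finrank F C) (ht : 1 ≤ t) (htV : t < finrank F V)
    {C W : Submodule F V} (hC : C ∈ P) (hCt : finrank F C = t) (hW : W ∈ P)
    (hWt : finrank F W = t) (hCW : C ≠ W) :
    Fintype.card F + 1 ≤ #(P.filter fun D : Submodule F V => finrank F D = t) := by
  obtain ⟨c, hcC, hc0⟩ := (Submodule.ne_bot_iff C).1 (hP.1 C hC)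
  have hcW : c ∉ W := fun hcW => hc0 <| by
    simpa using (Submodule.eq_bot_iff _).1 (hP.inf_eq_bot hC hW hCW) c ⟨hcC, hcW⟩
  obtain ⟨g, hgc, hWg⟩ := W.exists_dual_map_eq_bot_of_notMem hcW inferInstance
  have hq := hP.le_card_filter_not_le_ker hmin ht htV hC hCt fun h => hgc (h hcC)
  have hsub : {D ∈ P | ¬ D ≤ LinearMap.ker g ∧ finrank F D = t} ⊆
      (P.filter fun D : Submodule F V => finrank F D = t).erase W := fun D hD => by
    obtain ⟨hDP, hDg, hDt⟩ := mem_filter.1 hD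
    exact mem_erase.2 ⟨fun hDW => hDg (hDW ▸ LinearMap.le_ker_iff_map.2 hWg),
      mem_filter.2 ⟨hDP, hDt⟩⟩
  have hcard := card_le_card hsub
  rw [card_erase_of_mem (mem_filter.2 ⟨hW, hWt⟩)] at hcard
  exact Nat.add_le_of_le_sub (card_pos.2 ⟨C, mem_filter.2 ⟨hC, hCt⟩⟩) (hq.trans hcard)

end IsVPartition

theorem stmt8_general (q n t : ℕ) (F : Type) [Field F] [Fintype F]
    (hq : Fintype.card F = q)
    (P : Finset (Submodule F (Fin n → F)))
    (hP : IsVPartition (↑P : Set (Submodule F (Fin n → F))))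
    (hr : 2 ≤ P.card)
    (hmin : ∀ Vi ∈ P, t ≤ Module.finrank F Vi)
    (hex : ∃ Vi ∈ P, Module.finrank F Vi = t) :
    q + 1 ≤ (P.filter (fun (Vi : Submodule F (Fin n → F)) => Module.finrank F Vi = t)).card := by
  subst hq
  obtain ⟨W, hW, hWt⟩ := hex
  have ht : 1 ≤ t := hWt ▸ Submodule.one_le_finrank_iff.2 (hP.1 W hW)
  have htV : t < finrank F (Fin n → F) := hWt ▸ Submodule.finrank_lt (hP.ne_top hr hW)
  obtain ⟨C, hC, hCt, hCW⟩ := hP.exists_ne_finrank_eq hmin ht htV hW hWt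
  exact hP.add_one_le_card_filter_finrank_eq hmin ht htV hC hCt hW hWt hCW

theorem stmt8 (q n t : ℕ) (F : Type) [Field F] [Fintype F]
    (hq : Fintype.card F = q) (hn : 1 < n)
    (P : Finset (Submodule F (Fin n → F)))
    (hP : IsVPartition (↑P : Set (Submodule F (Fin n → F))))
    (hr : 2 ≤ P.card)
    (hmin : ∀ Vi ∈ P, t ≤ Module.finrank F Vi)
    (hex : ∃ Vi ∈ P, Module.finrank F Vi = t) :
    q + 1 ≤ (P.filter (fun (Vi : Submodule F (Fin n → F)) => Module.finrank F Vi = t)).card :=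
  stmt8_general q n t F hq P hP hr hmin hex
end

section
/- Let P be a non-trivial partition of V_n(q) with r components, and let t be the minimum dimension of a component. Then r ≡ 1 (mod q^t); in particular r ≥ q^t + 1. -/
/-!
Every nonzero vector lies in exactly one component, so counting nonzero vectors gives
`q ^ n + r = ∑ᵢ q ^ dᵢ + 1`. All the exponents `n` and `dᵢ` are at least `t`, so reducing modulo
`q ^ t` leaves `r ≡ 1`; as `r ≥ 2`, this forces `r ≥ q ^ t + 1`.
-/

open scoped Classical

open Finset

namespace Submodule

variable {R M : Type*} [Semiring R] [AddCommMonoid M] [Module R M] [Fintype M]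

theorem card_erase_zero_add_one (W : Submodule R M) :
    (({v | v ∈ W} : Finset M).erase 0).card + 1 = Nat.card W := by
  rw [card_erase_add_one (by simp), Nat.card_eq_fintype_card, Fintype.card_subtype]

end Submodule

namespace IsVPartition

variable {F V : Type*} [Field F] [AddCommGroup V] [Module F V] {P : Finset (Submodule F V)}

theorem card_add_card_eq_sum_card_add_one [Finite V] (hP : IsVPartition (P : Set (Submodule F V))) :
    Nat.card V + #P = ∑ W ∈ P, Nat.card W + 1 := by
  have := Fintype.ofFinite V
  let nonzeros : Submodule F V → Finset V := fun W => ({v | v ∈ W} : Finset V).erase 0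
  have hunion : (univ : Finset V).erase 0 = P.biUnion nonzeros := by
    ext v
    simp only [mem_erase, mem_univ, and_true, true_and, mem_biUnion, mem_filter, nonzeros]
    refine ⟨fun hv => ?_, fun ⟨W, _, hv, _⟩ => hv⟩
    obtain ⟨W, ⟨hWP, hvW⟩, -⟩ := hP.2 v hv
    exact ⟨W, hWP, hv, hvW⟩
  have hdisj : (P : Set (Submodule F V)).PairwiseDisjoint nonzeros := by
    intro W₁ hW₁ W₂ hW₂ hne
    refine disjoint_left.2 fun v hv₁ hv₂ => hne ?_
    simp only [mem_erase, mem_filter, mem_univ, true_and, nonzeros] at hv₁ hv₂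
    exact (hP.2 v hv₁.1).unique ⟨hW₁, hv₁.2⟩ ⟨hW₂, hv₂.2⟩
  have hV : #((univ : Finset V).erase 0) + 1 = Nat.card V := by
    rw [card_erase_add_one (mem_univ 0), Nat.card_eq_fintype_card, card_univ]
  have hW : ∑ W ∈ P, Nat.card W = ∑ W ∈ P, (#(nonzeros W) + 1) :=
    sum_congr rfl fun W _ => W.card_erase_zero_add_one.symm
  rw [← hV, hunion, card_biUnion hdisj, hW, sum_add_distrib, sum_const, smul_eq_mul, mul_one]
  ring

theorem card_modEq_one [Fintype F] [FiniteDimensional F V]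
    (hP : IsVPartition (P : Set (Submodule F V))) {t : ℕ}
    (hmin : ∀ W ∈ P, t ≤ Module.finrank F W) (htV : t ≤ Module.finrank F V) :
    #P ≡ 1 [MOD Fintype.card F ^ t] := by
  have := Module.finite_of_finite F (M := V)
  have hcount := hP.card_add_card_eq_sum_card_add_one
  rw [Module.natCard_eq_pow_finrank (K := F),
    sum_congr rfl fun (W : Submodule F V) _ => Module.natCard_eq_pow_finrank (K := F) (V := ↥W),
    Nat.card_eq_fintype_card] at hcount
  set q := Fintype.card F
  have hV : q ^ Module.finrank F V ≡ 0 [MOD q ^ t] :=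
    Nat.modEq_zero_iff_dvd.2 (pow_dvd_pow q htV)
  have hsum : ∑ W ∈ P, q ^ Module.finrank F W ≡ 0 [MOD q ^ t] :=
    Nat.modEq_zero_iff_dvd.2 (dvd_sum fun W hW => pow_dvd_pow q (hmin W hW))
  calc #P = 0 + #P := (zero_add _).symm
    _ ≡ q ^ Module.finrank F V + #P [MOD q ^ t] := hV.symm.add_right _
    _ = ∑ W ∈ P, q ^ Module.finrank F W + 1 := hcount
    _ ≡ 0 + 1 [MOD q ^ t] := hsum.add_right _

end IsVPartition

theorem stmt10_general (q n t : ℕ) (F : Type) [Field F] [Fintype F]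
    (hq : Fintype.card F = q)
    (P : Finset (Submodule F (Fin n → F)))
    (hP : IsVPartition (↑P : Set (Submodule F (Fin n → F))))
    (hr : 2 ≤ P.card)
    (hmin : ∀ Vi ∈ P, t ≤ Module.finrank F Vi)
    (hex : ∃ Vi ∈ P, Module.finrank F Vi = t) :
    P.card % q ^ t = 1 ∧ q ^ t + 1 ≤ P.card := by
  obtain ⟨W₀, hW₀, rfl⟩ := hex
  set t := Module.finrank F W₀
  have ht : 1 ≤ t := Submodule.one_le_finrank_iff.2 (hP.1 W₀ hW₀)
  have htn : t ≤ Module.finrank F (Fin n → F) := Submodule.finrank_le W₀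
  have hmod : P.card ≡ 1 [MOD q ^ t] := hq ▸ hP.card_modEq_one hmin htn
  have hqt : 1 < q ^ t := Nat.one_lt_pow (by omega) (hq ▸ Fintype.one_lt_card)
  refine ⟨Eq.trans hmod (Nat.mod_eq_of_lt hqt), ?_⟩
  have hdvd : q ^ t ∣ P.card - 1 := (Nat.modEq_iff_dvd' (by omega)).1 hmod.symm
  have := Nat.le_of_dvd (by omega) hdvd
  omega

theorem stmt10 (q n t : ℕ) (F : Type) [Field F] [Fintype F]
    (hq : Fintype.card F = q) (hn : 1 < n)
    (P : Finset (Submodule F (Fin n → F)))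
    (hP : IsVPartition (↑P : Set (Submodule F (Fin n → F))))
    (hr : 2 ≤ P.card)
    (hmin : ∀ Vi ∈ P, t ≤ Module.finrank F Vi)
    (hex : ∃ Vi ∈ P, Module.finrank F Vi = t) :
    P.card % q ^ t = 1 ∧ q ^ t + 1 ≤ P.card :=
  stmt10_general q n t F hq P hP hr hmin hex
end

section
/- Let T = {n_1, ..., n_k} with n_1 < ... < n_k < n, n = n_k + n_{k-1}, 2 n_k > n, and n_1 = 1. Then V_n(q) admits a T-partition. -/
/-!
Let `E` be the extension of `F` of degree `n_k` and `ι : F^{n_{k-1}} → E` an `F`-linear injection.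
Every nonzero vector of `F^{n_{k-1}} × E` lies in exactly one of `0 × E` and the graphs of
`u ↦ α ι(u)`, `α ∈ E`. There are `q^{n_k} > n_{k-1}` graphs, so every dimension `d ≠ n_k` in `T`
can be assigned to one of them; refining each graph by a `d`-dimensional subspace together with
the lines outside it gives a partition with dimension set exactly `T`.
-/

open scoped Classical

open Module

namespace Submodule

variable {F V : Type*} [Field F] [AddCommGroup V] [Module F V]

theorem exists_le_finrank_eq (W : Submodule F V) [FiniteDimensional F W] {d : ℕ}
    (hd : d ≤ finrank F W) : ∃ X ≤ W, finrank F X = d := by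
  obtain ⟨f, hf⟩ := exists_linearIndependent_of_le_finrank hd
  exact ⟨(span F (Set.range f)).map W.subtype, map_subtype_le _ _, by
    rw [finrank_map_subtype_eq, finrank_span_eq_card hf, Fintype.card_fin]⟩

theorem span_singleton_eq_of_mem {v w : V} (hv : v ∈ F ∙ w) (hv0 : v ≠ 0) : F ∙ w = F ∙ v := by
  have hw0 : w ≠ 0 := by rintro rfl; simp_all
  exact eq_span_singleton_of_mem_of_finrank_eq_one (finrank_span_singleton hw0) hv hv0

end Submodule

section Partition

variable {F V : Type*} [Field F] [AddCommGroup V] [Module F V]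

def IsVPartitionOf (W : Submodule F V) (P : Set (Submodule F V)) : Prop :=
  (∀ X ∈ P, X ≠ ⊥ ∧ X ≤ W) ∧ ∀ v ∈ W, v ≠ 0 → ∃! X, X ∈ P ∧ v ∈ X

def insertLines (W X : Submodule F V) : Set (Submodule F V) :=
  insert X ((fun v => F ∙ v) '' (↑W \ ↑X))

theorem isVPartitionOf_insertLines {W X : Submodule F V} (hXW : X ≤ W) (hX : X ≠ ⊥) :
    IsVPartitionOf W (insertLines W X) := by
  refine ⟨?_, fun v hvW hv0 => ?_⟩
  · rintro Y (rfl | ⟨v, ⟨hvW, hvX⟩, rfl⟩)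
    · exact ⟨hX, hXW⟩
    · refine ⟨?_, (Submodule.span_singleton_le_iff_mem _ _).mpr hvW⟩
      rw [Ne, Submodule.span_singleton_eq_bot]
      rintro rfl
      exact hvX X.zero_mem
  by_cases hvX : v ∈ X
  · refine ⟨X, ⟨Set.mem_insert _ _, hvX⟩, ?_⟩
    rintro Y ⟨rfl | ⟨w, ⟨-, hwX⟩, rfl⟩, hvY⟩
    · rfl
    · refine absurd ?_ hwX
      have hwv : w ∈ F ∙ v := Submodule.span_singleton_eq_of_mem hvY hv0 ▸
        Submodule.mem_span_singleton_self w
      exact (Submodule.span_singleton_le_iff_mem _ _).mpr hvX hwv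
  · refine ⟨F ∙ v, ⟨Or.inr ⟨v, ⟨hvW, hvX⟩, rfl⟩, Submodule.mem_span_singleton_self v⟩, ?_⟩
    rintro Y ⟨rfl | ⟨w, -, rfl⟩, hvY⟩
    · exact absurd hvY hvX
    · exact Submodule.span_singleton_eq_of_mem hvY hv0

theorem finrank_of_mem_insertLines {W X Y : Submodule F V} (hY : Y ∈ insertLines W X) :
    finrank F Y = finrank F X ∨ finrank F Y = 1 := by
  rcases hY with rfl | ⟨v, ⟨-, hvX⟩, rfl⟩
  · exact Or.inl rfl
  · have hv0 : v ≠ 0 := by rintro rfl; exact hvX X.zero_mem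
    exact Or.inr (finrank_span_singleton hv0)

theorem isVPartition_iUnion {ι : Type*} {W : ι → Submodule F V}
    (hW : ∀ v : V, v ≠ 0 → ∃! i, v ∈ W i) {Q : ι → Set (Submodule F V)}
    (hQ : ∀ i, IsVPartitionOf (W i) (Q i)) : IsVPartition (⋃ i, Q i) := by
  refine ⟨fun X hX => ?_, fun v hv => ?_⟩
  · obtain ⟨i, hXi⟩ := Set.mem_iUnion.mp hX
    exact ((hQ i).1 X hXi).1
  obtain ⟨i, hvi, hi_unique⟩ := hW v hv
  obtain ⟨X, ⟨hXi, hvX⟩, hX_unique⟩ := (hQ i).2 v hvi hv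
  refine ⟨X, ⟨Set.mem_iUnion.mpr ⟨i, hXi⟩, hvX⟩, ?_⟩
  rintro Y ⟨hY, hvY⟩
  obtain ⟨j, hYj⟩ := Set.mem_iUnion.mp hY
  obtain rfl : j = i := hi_unique j (((hQ j).1 Y hYj).2 hvY)
  exact hX_unique Y ⟨hYj, hvY⟩

theorem exists_isVPartition_dimSet_eq_range [FiniteDimensional F V] {ι : Type*}
    {W : ι → Submodule F V} (hW : ∀ v : V, v ≠ 0 → ∃! i, v ∈ W i) {d : ι → ℕ}
    (hd_pos : ∀ i, 0 < d i) (hd_le : ∀ i, d i ≤ finrank F (W i)) (hone : 1 ∈ Set.range d) :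
    ∃ P : Set (Submodule F V), IsVPartition P ∧ DimSet P = Set.range d := by
  choose X hXW hXd using fun i => (W i).exists_le_finrank_eq (hd_le i)
  have hX : ∀ i, X i ≠ ⊥ := fun i hXi => (hd_pos i).ne' (by rw [← hXd i, hXi, finrank_bot])
  refine ⟨⋃ i, insertLines (W i) (X i),
    isVPartition_iUnion hW fun i => isVPartitionOf_insertLines (hXW i) (hX i),
    subset_antisymm ?_ ?_⟩
  · rintro _ ⟨Y, hY, rfl⟩
    obtain ⟨i, hYi⟩ := Set.mem_iUnion.mp hY
    rcases finrank_of_mem_insertLines hYi with h | h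
    · exact ⟨i, by rw [h, hXd]⟩
    · rwa [h]
  · rintro _ ⟨i, rfl⟩
    exact ⟨X i, Set.mem_iUnion.mpr ⟨i, Set.mem_insert _ _⟩, hXd i⟩

theorem LinearEquiv.existsUnique_mem_map {V' ι : Type*} [AddCommGroup V'] [Module F V']
    (e : V ≃ₗ[F] V') {W : ι → Submodule F V} (hW : ∀ v : V, v ≠ 0 → ∃! i, v ∈ W i)
    (v' : V') (hv' : v' ≠ 0) : ∃! i, v' ∈ (W i).map (e : V →ₗ[F] V') := by
  simpa only [Submodule.mem_map_equiv] using hW (e.symm v') (by simpa using hv')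

end Partition

section Spread

variable {F U E : Type*} [Field F] [AddCommGroup U] [Module F U] [Field E] [Algebra F E]

/-- For injective `ι`, the components of a partition of `U × E` of type
`[(|E|, dim U), (1, dim E)]`. -/
def spreadComponent (ι : U →ₗ[F] E) : Option E → Submodule F (U × E)
  | none => LinearMap.ker (LinearMap.fst F U E)
  | some α => LinearMap.graph (α • ι)

theorem existsUnique_mem_spreadComponent {ι : U →ₗ[F] E} (hι : Function.Injective ι)
    (v : U × E) (hv : v ≠ 0) : ∃! i, v ∈ spreadComponent ι i := by
  obtain ⟨u, x⟩ := v
  have hnone : (u, x) ∈ spreadComponent ι none ↔ u = 0 := LinearMap.mem_ker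
  have hsome (α : E) : (u, x) ∈ spreadComponent ι (some α) ↔ x = α * ι u :=
    LinearMap.mem_graph_iff _ _
  by_cases hu : u = 0
  · refine ⟨none, hnone.mpr hu, ?_⟩
    rintro (_ | α) hα
    · rfl
    · rw [hsome, hu, map_zero, mul_zero] at hα
      exact absurd (by rw [hu, hα]; rfl) hv
  · have hιu : ι u ≠ 0 := (map_ne_zero_iff ι hι).mpr hu
    refine ⟨some (x / ι u), (hsome _).mpr (div_mul_cancel₀ x hιu).symm, ?_⟩
    rintro (_ | α) hα
    · exact absurd (hnone.mp hα) hu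
    · rw [hsome] at hα
      rw [hα, mul_div_cancel_right₀ α hιu]

theorem finrank_spreadComponent_none (ι : U →ₗ[F] E) :
    finrank F (spreadComponent ι none) = finrank F E := by
  rw [spreadComponent, ← LinearMap.range_inr,
    LinearMap.finrank_range_of_inj LinearMap.inr_injective]

theorem finrank_spreadComponent_some (ι : U →ₗ[F] E) (α : E) :
    finrank F (spreadComponent ι (some α)) = finrank F U := by
  rw [spreadComponent, LinearMap.graph_eq_range_prod,
    LinearMap.finrank_range_of_inj fun x y h => congrArg Prod.fst h]

end Spread

open Finset

theorem exists_isVPartition_dimSet_eq_insert {F U E V : Type*} [Field F] [AddCommGroup U]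
    [Module F U] [FiniteDimensional F U] [Field E] [Algebra F E] [Finite E] [AddCommGroup V]
    [Module F V] [FiniteDimensional F V] {ι : U →ₗ[F] E} (hι : Function.Injective ι)
    (hV : finrank F V = finrank F U + finrank F E) {D : Finset ℕ}
    (hD : ∀ m ∈ D, 0 < m ∧ m ≤ finrank F U) (hone : 1 ∈ D) (hcard : #D ≤ Nat.card E) :
    ∃ P : Set (Submodule F V), IsVPartition P ∧ DimSet P = insert (finrank F E) ↑D := by
  obtain ⟨e⟩ : Nonempty ((U × E) ≃ₗ[F] V) :=
    FiniteDimensional.nonempty_linearEquiv_of_finrank_eq (by rw [finrank_prod, hV])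
  have := Fintype.ofFinite E
  obtain ⟨emb⟩ : Nonempty (D ↪ E) := Function.Embedding.nonempty_of_card_le
    (by rwa [Fintype.card_coe, Fintype.card_eq_nat_card])
  have : Nonempty D := ⟨⟨1, hone⟩⟩
  let d : Option E → ℕ := fun i => i.elim (finrank F E) fun α => (Function.invFun emb α : D).1
  have hrange : Set.range d = insert (finrank F E) ↑D := by
    ext m
    have hval : (∃ α, (Function.invFun emb α : D).1 = m) ↔ m ∈ D :=
      ⟨fun ⟨α, hα⟩ => hα ▸ (Function.invFun emb α).2, fun hm =>
        (Function.invFun_surjective emb.injective ⟨m, hm⟩).imp fun _ h => congrArg Subtype.val h⟩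
    simp only [d, Set.mem_range, Option.exists, Option.elim_none, Option.elim_some, hval,
      Set.mem_insert_iff, Finset.mem_coe, eq_comm (a := finrank F E)]
  have hd_pos : ∀ i, 0 < d i
    | none => finrank_pos
    | some α => (hD _ (Function.invFun emb α).2).1
  have hd_le : ∀ i, d i ≤ finrank F ((spreadComponent ι i).map (e : U × E →ₗ[F] V))
    | none => by simp [d, LinearEquiv.finrank_map_eq, finrank_spreadComponent_none]
    | some α => by
      simpa [d, LinearEquiv.finrank_map_eq, finrank_spreadComponent_some] using
        (hD _ (Function.invFun emb α).2).2
  rw [← hrange]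
  exact exists_isVPartition_dimSet_eq_range
    (e.existsUnique_mem_map (existsUnique_mem_spreadComponent hι)) hd_pos hd_le
    (hrange ▸ Set.mem_insert_of_mem _ hone)

theorem stmt17_general (n : ℕ) (F : Type) [Field F] [Fintype F]
    (T : Finset ℕ) (hpos : ∀ m ∈ T, 0 < m)
    (nk nk1 : ℕ) (hnk : nk ∈ T)
    (hnk1 : nk1 ∈ T) (hlt : nk1 < nk) (hsecond : ∀ m ∈ T, m ≠ nk → m ≤ nk1)
    (hone : 1 ∈ T)
    (hsum : n = nk + nk1) :
    ∃ P : Set (Submodule F (Fin n → F)),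
      IsVPartition P ∧ DimSet P = ↑T := by
  obtain ⟨p, _⟩ := CharP.exists F
  have := Fact.mk (CharP.char_is_prime F p)
  have : NeZero nk := ⟨(hpos nk hnk).ne'⟩
  let E := FiniteField.Extension F p nk
  have hE : finrank F E = nk := FiniteField.finrank_extension F p nk
  obtain ⟨ι, hι⟩ : ∃ ι : (Fin nk1 → F) →ₗ[F] E, Function.Injective ι :=
    finrank_le_iff_exists_linearMap.mp (by rw [finrank_fin_fun, hE]; exact hlt.le)
  have hD : ∀ m ∈ T.erase nk, 0 < m ∧ m ≤ nk1 := fun m hm =>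
    ⟨hpos m (mem_of_mem_erase hm), hsecond m (mem_of_mem_erase hm) (ne_of_mem_erase hm)⟩
  have hcard : #(T.erase nk) ≤ Nat.card E := calc
    #(T.erase nk) ≤ #(Icc 1 nk1) := card_le_card fun m hm => mem_Icc.mpr (hD m hm)
    _ ≤ 2 ^ nk := by simpa using (hlt.trans Nat.lt_two_pow_self).le
    _ ≤ Nat.card F ^ nk := Nat.pow_le_pow_left Finite.one_lt_card nk
    _ = Nat.card E := (FiniteField.natCard_extension F p nk).symm
  obtain ⟨P, hP, hdim⟩ := exists_isVPartition_dimSet_eq_insert (V := Fin n → F) hι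
    (by rw [finrank_fin_fun, finrank_fin_fun, hE, hsum, add_comm])
    (by simpa only [finrank_fin_fun] using hD)
    (mem_erase.mpr ⟨by have := hpos nk1 hnk1; omega, hone⟩) hcard
  refine ⟨P, hP, ?_⟩
  rw [hdim, hE, ← coe_insert, insert_erase hnk]

theorem stmt17 (q n : ℕ) (F : Type) [Field F] [Fintype F]
    (hq : Fintype.card F = q)
    (T : Finset ℕ) (hpos : ∀ m ∈ T, 0 < m) (hcard : 2 ≤ T.card)
    (nk nk1 : ℕ) (hnk : nk ∈ T) (hmax : ∀ m ∈ T, m ≤ nk)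
    (hnk1 : nk1 ∈ T) (hlt : nk1 < nk) (hsecond : ∀ m ∈ T, m ≠ nk → m ≤ nk1)
    (hone : 1 ∈ T)
    (hnkn : nk < n) (hsum : n = nk + nk1) (h2nk : n < 2 * nk) :
    ∃ P : Set (Submodule F (Fin n → F)),
      IsVPartition P ∧ DimSet P = ↑T :=
  stmt17_general n F T hpos nk nk1 hnk hnk1 hlt hsecond hone hsum
end

section
/- Let P be a non-trivial partition of V_n(q) whose set S of minimum-dimension components has size at least 3. Then there exists a hyperplane W of V_n(q) that contains at least one component of S but does not contain all components of S. -/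
/-!
Two distinct components `V₁, V₂` of a partition meet only in `0`, so some `v ∈ V₂` lies
outside `V₁`. A linear functional vanishing on `V₁` but not at `v` has as kernel a hyperplane
containing `V₁` but not `V₂`.
-/

open scoped Classical

open Module

theorem Submodule.exists_finrank_eq_sub_one_le_notMem {K V : Type*} [DivisionRing K]
    [AddCommGroup V] [Module K V] [FiniteDimensional K V] {p : Submodule K V} {v : V} (hv : v ∉ p) :
    ∃ W : Submodule K V, finrank K W = finrank K V - 1 ∧ p ≤ W ∧ v ∉ W := by
  obtain ⟨f, hfv, hpf⟩ := p.exists_le_ker_of_notMem hv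
  have hf : f ≠ 0 := ne_of_apply_ne (· v) hfv
  refine ⟨LinearMap.ker f, ?_, hpf, hfv⟩
  have := Dual.finrank_ker_add_one_of_ne_zero hf
  omega

theorem IsVPartition.exists_mem_notMem_of_ne {F V : Type*} [Field F] [AddCommGroup V]
    [Module F V] {P : Set (Submodule F V)} (hP : IsVPartition P) {V₁ V₂ : Submodule F V}
    (h₁ : V₁ ∈ P) (h₂ : V₂ ∈ P) (hne : V₁ ≠ V₂) : ∃ v ∈ V₂, v ∉ V₁ := by
  obtain ⟨v, hv₂, hv0⟩ := (Submodule.ne_bot_iff V₂).mp (hP.1 V₂ h₂)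
  refine ⟨v, hv₂, fun hv₁ => hne ?_⟩
  exact (hP.2 v hv0).unique ⟨h₁, hv₁⟩ ⟨h₂, hv₂⟩

theorem stmt19_general (n t : ℕ) (F : Type) [Field F]
    (P : Finset (Submodule F (Fin n → F)))
    (hP : IsVPartition (↑P : Set (Submodule F (Fin n → F))))
    (hS : 3 ≤ (P.filter (fun (Vi : Submodule F (Fin n → F)) => Module.finrank F Vi = t)).card) :
    ∃ W : Submodule F (Fin n → F), Module.finrank F W = n - 1 ∧
      (∃ V1 ∈ P.filter (fun (Vi : Submodule F (Fin n → F)) => Module.finrank F Vi = t), V1 ≤ W) ∧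
      (∃ V2 ∈ P.filter (fun (Vi : Submodule F (Fin n → F)) => Module.finrank F Vi = t), ¬ V2 ≤ W) := by
  obtain ⟨V₁, hV₁, V₂, hV₂, hne⟩ := Finset.one_lt_card.mp (lt_of_lt_of_le (by norm_num) hS)
  obtain ⟨v, hv₂, hv₁⟩ := hP.exists_mem_notMem_of_ne
    (Finset.mem_coe.mpr (Finset.mem_filter.mp hV₁).1)
    (Finset.mem_coe.mpr (Finset.mem_filter.mp hV₂).1) hne
  obtain ⟨W, hW, hV₁W, hvW⟩ := Submodule.exists_finrank_eq_sub_one_le_notMem hv₁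
  rw [finrank_fin_fun] at hW
  exact ⟨W, hW, ⟨V₁, hV₁, hV₁W⟩, ⟨V₂, hV₂, fun hle => hvW (hle hv₂)⟩⟩

theorem stmt19 (q n t : ℕ) (F : Type) [Field F] [Fintype F]
    (hq : Fintype.card F = q) (hn : 2 ≤ n)
    (P : Finset (Submodule F (Fin n → F)))
    (hP : IsVPartition (↑P : Set (Submodule F (Fin n → F))))
    (hprop : ∀ W ∈ P, W ≠ ⊤) (hr : 2 ≤ P.card)
    (hmin : ∀ Vi ∈ P, t ≤ Module.finrank F Vi)
    (hex : ∃ Vi ∈ P, Module.finrank F Vi = t)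
    (h2t : 2 * t ≤ n)
    (hS : 3 ≤ (P.filter (fun (Vi : Submodule F (Fin n → F)) => Module.finrank F Vi = t)).card) :
    ∃ W : Submodule F (Fin n → F), Module.finrank F W = n - 1 ∧
      (∃ V1 ∈ P.filter (fun (Vi : Submodule F (Fin n → F)) => Module.finrank F Vi = t), V1 ≤ W) ∧
      (∃ V2 ∈ P.filter (fun (Vi : Submodule F (Fin n → F)) => Module.finrank F Vi = t), ¬ V2 ≤ W) :=
  stmt19_general n t F P hP hS
end
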